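/- arXiv:1904.09721 — 7 statements merged into one kernel-verified Lean document; each statement's English description precedes it below -/
import Mathlib

section
/- Every quotient of the free product ℤ/2 ∗ ℤ/2 is either a cyclic group or a dihedral group. Precisely: for every normal subgroup N of ℤ/2 ∗ ℤ/2, the quotient group (ℤ/2 ∗ ℤ/2)/N is isomorphic to the cyclic group ZMod k for some natural number k, or to DihedralGroup n for some natural number n (the case n = 0 being the infinite dihedral group, which is isomorphic to ℤ/2 ∗ ℤ/2 itself). -/
private theorem aux_two_involutions (Q : Type*) [Group Q] (x y : Q)
    (hx : x * x = 1) (hy : y * y = 1)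
    (hgen : ∀ q : Q, q ∈ Subgroup.closure {x, y}) :
    (∃ k : ℕ, Nonempty (Q ≃* Multiplicative (ZMod k))) ∨
      (∃ n : ℕ, Nonempty (Q ≃* DihedralGroup n)) := by
  set ρ : Q := x * y with hρ
  have hxinv : x⁻¹ = x := inv_eq_of_mul_eq_one_right hx
  have hyinv : y⁻¹ = y := inv_eq_of_mul_eq_one_right hy
  have hcanc : ∀ a : Q, x * (x * a) = a := by
    intro a; rw [← mul_assoc, hx, one_mul]
  have hconj : x * ρ * x⁻¹ = ρ⁻¹ := by
    rw [hρ, mul_inv_rev, hxinv, hyinv, ← mul_assoc, hx, one_mul]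
  set n : ℕ := orderOf ρ with hn
  set H : Subgroup Q := Subgroup.zpowers ρ with hH
  have hconjz : ∀ i : ℤ, x * ρ ^ i * x⁻¹ = ρ ^ (-i) := by
    intro i
    rw [← conj_zpow, hconj, zpow_neg, inv_zpow]
  -- the ZMod n → Q "rotation" map
  set f : ℤ →+ Additive Q := zmultiplesHom (Additive Q) (Additive.ofMul ρ) with hfdef
  have hf : f (n : ℤ) = 0 := by
    show (n : ℤ) • Additive.ofMul ρ = 0
    rw [← ofMul_zpow, zpow_natCast, pow_orderOf_eq_one]
    rfl
  set L : ZMod n →+ Additive Q := ZMod.lift n ⟨f, hf⟩ with hLdef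
  set χ : ZMod n → Q := fun i => (L i).toMul with hχdef
  have hχcast : ∀ i : ℤ, χ (i : ZMod n) = ρ ^ i := by
    intro i
    show (L ((i : ℤ) : ZMod n)).toMul = ρ ^ i
    rw [hLdef, ZMod.lift_coe]
    show ((i : ℤ) • Additive.ofMul ρ).toMul = ρ ^ i
    rw [← ofMul_zpow]
    rfl
  have hχadd : ∀ i j : ZMod n, χ (i + j) = χ i * χ j := by
    intro i j
    show (L (i + j)).toMul = (L i).toMul * (L j).toMul
    rw [map_add]; rfl
  have hχzero : χ 0 = 1 := by
    show (L 0).toMul = 1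
    rw [map_zero]; rfl
  have hχneg : ∀ i : ZMod n, χ (-i) = (χ i)⁻¹ := by
    intro i
    show (L (-i)).toMul = ((L i).toMul)⁻¹
    rw [map_neg]; rfl
  have hχmem : ∀ i : ZMod n, χ i ∈ H := by
    intro i
    obtain ⟨j, rfl⟩ := ZMod.intCast_surjective i
    rw [hχcast]
    exact Subgroup.zpow_mem _ (Subgroup.mem_zpowers ρ) j
  have hχinj : ∀ i : ZMod n, χ i = 1 → i = 0 := by
    intro i hi
    obtain ⟨j, rfl⟩ := ZMod.intCast_surjective i
    rw [hχcast] at hi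
    rw [ZMod.intCast_zmod_eq_zero_iff_dvd]
    exact_mod_cast orderOf_dvd_iff_zpow_eq_one.mpr hi
  have hχinj2 : ∀ i j : ZMod n, χ i = χ j → i = j := by
    intro i j hij
    have : χ (i + -j) = 1 := by
      rw [hχadd, hχneg, hij, mul_inv_cancel]
    have := hχinj _ this
    rwa [add_neg_eq_zero] at this
  have hχsurjH : ∀ q ∈ H, ∃ i : ZMod n, χ i = q := by
    intro q hq
    obtain ⟨j, rfl⟩ := Subgroup.mem_zpowers_iff.mp hq
    exact ⟨(j : ZMod n), hχcast j⟩
  have hχconj : ∀ i : ZMod n, x * χ i * x⁻¹ = χ (-i) := by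
    intro i
    obtain ⟨j, rfl⟩ := ZMod.intCast_surjective i
    rw [hχcast, hconjz, ← Int.cast_neg, hχcast]
  have hχswap : ∀ i : ZMod n, χ i * x = x * χ (-i) := by
    intro i
    rw [← hχconj i, hxinv, show x * (x * χ i * x) = x * (x * (χ i * x)) from by group,
      hcanc]
  -- conjugation-by-x stability of H
  have hHconj : ∀ q ∈ H, x * q * x ∈ H := by
    intro q hq
    obtain ⟨i, rfl⟩ := hχsurjH q hq
    rw [show x * χ i * x = x * χ i * x⁻¹ from by rw [hxinv], hχconj]
    exact hχmem _
  -- key: every element is in H or in x•H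
  have key : ∀ q : Q, q ∈ H ∨ x * q ∈ H := by
    intro q
    refine Subgroup.closure_induction ?_ ?_ ?_ ?_ (hgen q)
    · rintro g (rfl | rfl)
      · right; rw [hx]; exact one_mem _
      · right
        exact Subgroup.mem_zpowers ρ
    · left; exact one_mem _
    · rintro a b _ _ (ha | ha) (hb | hb)
      · left; exact mul_mem ha hb
      · right
        have : x * (a * b) = (x * a * x) * (x * b) := by
          rw [show (x * a * x) * (x * b) = (x * a) * (x * (x * b)) from by group,
            hcanc, mul_assoc]
        rw [this]
        exact mul_mem (hHconj a ha) hb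
      · right
        rw [← mul_assoc]
        exact mul_mem ha hb
      · left
        have h1 : a * x ∈ H := by
          have := hHconj _ ha
          rwa [hcanc] at this
        have : a * b = (a * x) * (x * b) := by
          rw [show (a * x) * (x * b) = a * (x * (x * b)) from by group, hcanc]
        rw [this]
        exact mul_mem h1 hb
    · rintro a _ (ha | ha)
      · left; exact inv_mem ha
      · right
        have h1 : a * x ∈ H := by
          have := hHconj _ ha
          rwa [hcanc] at this
        have : x * a⁻¹ = (a * x)⁻¹ := by rw [mul_inv_rev, hxinv]
        rw [this]
        exact inv_mem h1
  by_cases hxH : x ∈ H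
  · -- cyclic case
    left
    refine ⟨n, ⟨?_⟩⟩
    have hallH : ∀ q : Q, q ∈ H := by
      intro q
      rcases key q with h | h
      · exact h
      · have : q = x⁻¹ * (x * q) := by group
        rw [this]
        exact mul_mem (inv_mem hxH) h
    set ψ : Multiplicative (ZMod n) →* Q := AddMonoidHom.toMultiplicativeLeft L with hψ
    have hψeq : ∀ i : Multiplicative (ZMod n), ψ i = χ i.toAdd := fun _ => rfl
    have hbij : Function.Bijective ψ := by
      constructor
      · intro a b hab
        rw [hψeq, hψeq] at hab
        exact hχinj2 _ _ hab
      · intro q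
        obtain ⟨i, hi⟩ := hχsurjH q (hallH q)
        exact ⟨Multiplicative.ofAdd i, hi⟩
    exact (MulEquiv.ofBijective ψ hbij).symm
  · -- dihedral case
    right
    refine ⟨n, ⟨?_⟩⟩
    set φf : DihedralGroup n → Q := fun g =>
      match g with
      | .r i => χ i
      | .sr i => x * χ i with hφf
    have hmul : ∀ a b : DihedralGroup n, φf (a * b) = φf a * φf b := by
      rintro (i | i) (j | j)
      · show χ (i + j) = χ i * χ j
        exact hχadd i j
      · show x * χ (j - i) = χ i * (x * χ j)
        rw [← mul_assoc, hχswap, mul_assoc, ← hχadd, neg_add_eq_sub]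
      · show x * χ (i + j) = (x * χ i) * χ j
        rw [hχadd, mul_assoc]
      · show χ (j - i) = (x * χ i) * (x * χ j)
        rw [show (x * χ i) * (x * χ j) = x * ((χ i * x) * χ j) from by group,
          hχswap, show x * ((x * χ (-i)) * χ j) = x * (x * (χ (-i) * χ j)) from by group,
          hcanc, ← hχadd, neg_add_eq_sub]
    set φ : DihedralGroup n →* Q := MonoidHom.mk' φf hmul with hφ
    have hbij : Function.Bijective φ := by
      constructor
      · rintro (i | i) (j | j) hab
        · rw [show φ _ = χ i from rfl, show φ _ = χ j from rfl] at hab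
          rw [hχinj2 _ _ hab]
        · exfalso
          rw [show φ _ = χ i from rfl, show φ _ = x * χ j from rfl] at hab
          apply hxH
          have : x = χ i * (χ j)⁻¹ := by rw [hab]; group
          rw [this, ← hχneg, ← hχadd]
          exact hχmem _
        · exfalso
          rw [show φ _ = x * χ i from rfl, show φ _ = χ j from rfl] at hab
          apply hxH
          have : x = χ j * (χ i)⁻¹ := by rw [← hab]; group
          rw [this, ← hχneg, ← hχadd]
          exact hχmem _
        · rw [show φ _ = x * χ i from rfl, show φ _ = x * χ j from rfl] at hab
          rw [hχinj2 _ _ (mul_left_cancel hab)]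
      · intro q
        rcases key q with h | h
        · obtain ⟨i, hi⟩ := hχsurjH q h
          exact ⟨.r i, hi⟩
        · obtain ⟨i, hi⟩ := hχsurjH _ h
          refine ⟨.sr i, ?_⟩
          rw [show φ _ = x * χ i from rfl, hi, ← mul_assoc, hx, one_mul]
    exact (MulEquiv.ofBijective φ hbij).symm

/-- Every quotient of the free product `ℤ/2 ∗ ℤ/2` is cyclic or dihedral. -/
theorem quotient_of_Z2_free_product_Z2_cyclic_or_dihedral
    (N : Subgroup (Monoid.Coprod (Multiplicative (ZMod 2)) (Multiplicative (ZMod 2))))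
    [N.Normal] :
    (∃ k : ℕ, Nonempty
      ((Monoid.Coprod (Multiplicative (ZMod 2)) (Multiplicative (ZMod 2)) ⧸ N) ≃*
        Multiplicative (ZMod k))) ∨
    (∃ n : ℕ, Nonempty
      ((Monoid.Coprod (Multiplicative (ZMod 2)) (Multiplicative (ZMod 2)) ⧸ N) ≃*
        DihedralGroup n)) := by
  set G := Monoid.Coprod (Multiplicative (ZMod 2)) (Multiplicative (ZMod 2)) with hG
  set u : Multiplicative (ZMod 2) := Multiplicative.ofAdd 1 with hu
  have huu : u * u = 1 := by decide
  set π : G →* G ⧸ N := QuotientGroup.mk' N with hπ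
  set x : G ⧸ N := π (Monoid.Coprod.inl u) with hxdef
  set y : G ⧸ N := π (Monoid.Coprod.inr u) with hydef
  have hx : x * x = 1 := by
    rw [hxdef, ← map_mul, ← map_mul, huu, map_one, map_one]
  have hy : y * y = 1 := by
    rw [hydef, ← map_mul, ← map_mul, huu, map_one, map_one]
  have hgen : ∀ q : G ⧸ N, q ∈ Subgroup.closure {x, y} := by
    intro q
    obtain ⟨g, rfl⟩ := QuotientGroup.mk'_surjective N q
    induction g using Monoid.Coprod.induction_on with
    | inl m =>
      have hm : m = 1 ∨ m = u := by revert m; decide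
      rcases hm with rfl | rfl
      · rw [map_one, map_one]; exact one_mem _
      · exact Subgroup.subset_closure (Or.inl rfl)
    | inr m =>
      have hm : m = 1 ∨ m = u := by revert m; decide
      rcases hm with rfl | rfl
      · rw [map_one, map_one]; exact one_mem _
      · exact Subgroup.subset_closure (Or.inr rfl)
    | mul a b ha hb =>
      rw [map_mul]
      exact mul_mem ha hb
  exact aux_two_involutions (G ⧸ N) x y hx hy hgen
end

section
/- Let G be a group that is not cyclic, that contains an element of order 4, and that admits no injective group homomorphism into DihedralGroup n for any natural number n. Then for every normal subgroup N of the free product ℤ/2 ∗ ℤ/2, there is no injective group homomorphism from G into the quotient (ℤ/2 ∗ ℤ/2)/N; that is, G is not isomorphic to any subgroup of any quotient of ℤ/2 ∗ ℤ/2. -/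
/-- A non-cyclic group with an element of order 4 that embeds in no dihedral group
does not embed in any quotient of `ℤ/2 ∗ ℤ/2`. -/
theorem not_embeds_in_quotient_of_Z2_free_product_Z2
    (G : Type) [Group G]
    (hnc : ¬ IsCyclic G)
    (h4 : ∃ g : G, orderOf g = 4)
    (hdih : ∀ (n : ℕ) (f : G →* DihedralGroup n), ¬ Function.Injective f)
    (N : Subgroup (Monoid.Coprod (Multiplicative (ZMod 2)) (Multiplicative (ZMod 2))))
    [N.Normal]
    (f : G →* (Monoid.Coprod (Multiplicative (ZMod 2)) (Multiplicative (ZMod 2)) ⧸ N)) :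
    ¬ Function.Injective f := by
  intro hf
  set C := Monoid.Coprod (Multiplicative (ZMod 2)) (Multiplicative (ZMod 2)) with hC
  set Q := C ⧸ N with hQ
  let π : C →* Q := QuotientGroup.mk' N
  let g : Multiplicative (ZMod 2) := Multiplicative.ofAdd 1
  have hg : g * g = 1 := by decide
  have hmem : ∀ m : Multiplicative (ZMod 2), m = 1 ∨ m = g := by decide
  set a : Q := π (Monoid.Coprod.inl g) with hadef
  set b : Q := π (Monoid.Coprod.inr g) with hbdef
  have ha2 : a * a = 1 := by
    rw [hadef, ← map_mul, ← map_mul, hg, map_one, map_one]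
  have hb2 : b * b = 1 := by
    rw [hbdef, ← map_mul, ← map_mul, hg, map_one, map_one]
  have hainv : a⁻¹ = a := inv_eq_of_mul_eq_one_right ha2
  have hbinv : b⁻¹ = b := inv_eq_of_mul_eq_one_right hb2
  set r : Q := a * b with hrdef
  have hb' : b = a * r := by rw [hrdef, ← mul_assoc, ha2, one_mul]
  have hrinv : r⁻¹ = b * a := by rw [hrdef, mul_inv_rev, hainv, hbinv]
  have key : a * r * a⁻¹ = r⁻¹ := by
    rw [hainv, hrinv, hrdef, ← mul_assoc, ha2, one_mul]
  set n : ℕ := orderOf r with hn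
  -- the homomorphism `ZMod n →+ Additive Q` sending `1` to `r`
  have hcond : zmultiplesHom (Additive Q) (Additive.ofMul r) (n : ℤ) = 0 := by
    show ((n : ℤ)) • Additive.ofMul r = 0
    rw [← ofMul_zpow, zpow_natCast, pow_orderOf_eq_one]
    rfl
  set ρ : ZMod n →+ Additive Q :=
    ZMod.lift n ⟨zmultiplesHom (Additive Q) (Additive.ofMul r), hcond⟩ with hρ
  set R : ZMod n → Q := fun i => Additive.toMul (ρ i) with hR
  have hRcast : ∀ k : ℤ, R ((k : ℤ) : ZMod n) = r ^ k := by
    intro k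
    show Additive.toMul (ρ ((k : ℤ) : ZMod n)) = r ^ k
    rw [hρ, ZMod.lift_coe]
    show Additive.toMul ((k : ℤ) • Additive.ofMul r) = r ^ k
    rw [← ofMul_zpow]
    rfl
  have hR0 : R 0 = 1 := by
    show Additive.toMul (ρ 0) = 1
    rw [map_zero]; rfl
  have hRadd : ∀ i j : ZMod n, R (i + j) = R i * R j := by
    intro i j
    show Additive.toMul (ρ (i + j)) = Additive.toMul (ρ i) * Additive.toMul (ρ j)
    rw [map_add]; rfl
  have hconj : ∀ i : ZMod n, a * R i * a = R (-i) := by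
    intro i
    obtain ⟨k, rfl⟩ := ZMod.intCast_surjective i
    have hcast : (-((k : ℤ) : ZMod n)) = (((-k : ℤ)) : ZMod n) := by push_cast; ring
    rw [hRcast k, hcast, hRcast (-k)]
    calc a * r ^ k * a = a * r ^ k * a⁻¹ := by rw [hainv]
      _ = (a * r * a⁻¹) ^ k := (conj_zpow).symm
      _ = (r⁻¹) ^ k := by rw [key]
      _ = r ^ (-k) := by rw [inv_zpow, zpow_neg]
  have hcomm : ∀ i : ZMod n, R i * a = a * R (-i) := by
    intro i
    calc R i * a = a * (a * R i * a) := by rw [← mul_assoc, ← mul_assoc, ha2, one_mul]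
      _ = a * R (-i) := by rw [hconj]
  have hRinj : ∀ i : ZMod n, R i = 1 → i = 0 := by
    intro i hi
    obtain ⟨k, rfl⟩ := ZMod.intCast_surjective i
    rw [hRcast] at hi
    have : ((orderOf r : ℤ)) ∣ k := orderOf_dvd_iff_zpow_eq_one.2 hi
    exact (ZMod.intCast_zmod_eq_zero_iff_dvd k n).2 this
  have hRzp : ∀ i : ZMod n, R i ∈ Subgroup.zpowers r := by
    intro i
    obtain ⟨k, rfl⟩ := ZMod.intCast_surjective i
    rw [hRcast]
    exact Subgroup.zpow_mem _ (Subgroup.mem_zpowers r) k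
  -- the homomorphism from the dihedral group
  let φ : DihedralGroup n →* Q :=
    { toFun := fun x => match x with
        | DihedralGroup.r i => R i
        | DihedralGroup.sr i => a * R i
      map_one' := by
        show R 0 = 1
        exact hR0
      map_mul' := by
        rintro (i | i) (j | j)
        · exact hRadd i j
        · show a * R (j - i) = R i * (a * R j)
          rw [← mul_assoc, hcomm i, mul_assoc, ← hRadd, neg_add_eq_sub]
        · show a * R (i + j) = a * R i * R j
          rw [hRadd, mul_assoc]
        · show R (j - i) = a * R i * (a * R j)
          rw [mul_assoc a (R i), ← mul_assoc (R i) a (R j), hcomm i,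
            mul_assoc a (R (-i)) (R j), ← mul_assoc a a, ha2, one_mul,
            ← hRadd, neg_add_eq_sub] }
  have hφr : ∀ i : ZMod n, φ (DihedralGroup.r i) = R i := fun _ => rfl
  have hφsr : ∀ i : ZMod n, φ (DihedralGroup.sr i) = a * R i := fun _ => rfl
  have haφ : a ∈ φ.range := ⟨DihedralGroup.sr 0, by rw [hφsr, hR0, mul_one]⟩
  have hbφ : b ∈ φ.range := by
    refine ⟨DihedralGroup.sr (((1 : ℤ)) : ZMod n), ?_⟩
    rw [hφsr, hRcast 1, zpow_one, hb']
  -- every element of Q lies in any subgroup containing a and b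
  have hgen : ∀ (K : Subgroup Q), a ∈ K → b ∈ K → ∀ q : Q, q ∈ K := by
    intro K haK hbK q
    obtain ⟨x, rfl⟩ := QuotientGroup.mk'_surjective N q
    induction x using Monoid.Coprod.induction_on with
    | inl m =>
      rcases hmem m with rfl | rfl
      · rw [show (π (Monoid.Coprod.inl (1 : Multiplicative (ZMod 2)))) = 1 by
          rw [map_one, map_one]]
        exact one_mem K
      · exact haK
    | inr m =>
      rcases hmem m with rfl | rfl
      · rw [show (π (Monoid.Coprod.inr (1 : Multiplicative (ZMod 2)))) = 1 by
          rw [map_one, map_one]]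
        exact one_mem K
      · exact hbK
    | mul x y hx hy => rw [map_mul]; exact mul_mem hx hy
  have hsurj : Function.Surjective φ := by
    intro q
    exact hgen φ.range haφ hbφ q
  by_cases hinj : Function.Injective φ
  · -- Q is isomorphic to a dihedral group
    let e := MulEquiv.ofBijective φ ⟨hinj, hsurj⟩
    exact hdih n (e.symm.toMonoidHom.comp f) (e.symm.injective.comp hf)
  · -- then Q is cyclic
    rw [Function.not_injective_iff] at hinj
    obtain ⟨x, y, hxy, hne⟩ := hinj
    have hker : φ (x * y⁻¹) = 1 := by rw [map_mul, map_inv, hxy, mul_inv_cancel]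
    have hzne : x * y⁻¹ ≠ 1 := fun h => hne (by rwa [mul_inv_eq_one] at h)
    have hacyc : a ∈ Subgroup.zpowers r := by
      obtain ⟨z, h1, h2⟩ : ∃ z : DihedralGroup n, φ z = 1 ∧ z ≠ 1 := ⟨x * y⁻¹, hker, hzne⟩
      cases z with
      | r i =>
        rw [hφr] at h1
        exact absurd (by rw [hRinj i h1]; exact DihedralGroup.one_def.symm) h2
      | sr i =>
        rw [hφsr] at h1
        have haR : a = (R i)⁻¹ := by
          rw [eq_inv_iff_mul_eq_one]
          exact h1
        rw [haR]
        exact inv_mem (hRzp i)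
    have hbcyc : b ∈ Subgroup.zpowers r := by
      rw [hb']
      exact mul_mem hacyc (Subgroup.mem_zpowers r)
    have hcyc : IsCyclic Q :=
      ⟨⟨r, fun q => hgen (Subgroup.zpowers r) hacyc hbcyc q⟩⟩
    -- G embeds in a cyclic group, hence is cyclic
    haveI := hcyc
    have : IsCyclic G := by
      let e := MonoidHom.ofInjective hf
      exact isCyclic_of_surjective e.symm.toMonoidHom e.symm.surjective
    exact hnc this
end

section
/- Let G be a finite group that has at least one subgroup of index 2. Then the number of subgroups of G of index 2 is odd. -/
open Subgroup

noncomputable section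

/-- The monoid hom to `Multiplicative (ZMod 2)` associated to an index-2 subgroup. -/
def homOfIndexTwo {G : Type} [Group G] (H : Subgroup G) (hH : H.index = 2) :
    G →* Multiplicative (ZMod 2) where
  toFun g := open scoped Classical in if g ∈ H then 1 else Multiplicative.ofAdd 1
  map_one' := by simp [one_mem]
  map_mul' a b := by
    classical
    by_cases ha : a ∈ H <;> by_cases hb : b ∈ H <;>
      simp [Subgroup.mul_mem_iff_of_index_two hH, ha, hb] <;> decide

lemma multZMod2_mul_self (x : Multiplicative (ZMod 2)) : x * x = 1 := by
  have h : x.toAdd + x.toAdd = 0 := CharTwo.add_self_eq_zero _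
  have : Multiplicative.ofAdd (x.toAdd + x.toAdd) = Multiplicative.ofAdd 0 := by rw [h]
  simpa [ofAdd_add] using this

lemma ker_homOfIndexTwo {G : Type} [Group G] (H : Subgroup G) (hH : H.index = 2) :
    (homOfIndexTwo H hH).ker = H := by
  classical
  ext g
  simp only [MonoidHom.mem_ker, homOfIndexTwo, MonoidHom.coe_mk, OneHom.coe_mk]
  by_cases hg : g ∈ H <;> simp [hg] <;> decide

lemma homOfIndexTwo_ne_one {G : Type} [Group G] (H : Subgroup G) (hH : H.index = 2) :
    homOfIndexTwo H hH ≠ 1 := by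
  classical
  intro hcontra
  have hHtop : H ≠ ⊤ := by
    intro h
    rw [h, Subgroup.index_top] at hH
    omega
  obtain ⟨g, hg⟩ : ∃ g, g ∉ H := by
    by_contra h
    push_neg at h
    exact hHtop ((Subgroup.eq_top_iff' H).2 h)
  have h1 : homOfIndexTwo H hH g = 1 := by rw [hcontra]; rfl
  simp only [homOfIndexTwo, MonoidHom.coe_mk, OneHom.coe_mk, hg, if_false] at h1
  exact absurd h1 (by decide)

lemma index_ker_eq_two {G : Type} [Group G] (f : G →* Multiplicative (ZMod 2))
    (hf : f ≠ 1) : f.ker.index = 2 := by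
  rw [Subgroup.index_ker]
  have hcard2 : Nat.card (Multiplicative (ZMod 2)) = 2 := by
    rw [Nat.card_eq_fintype_card]; rfl
  haveI : Fact (Nat.card (Multiplicative (ZMod 2))).Prime := ⟨by rw [hcard2]; exact Nat.prime_two⟩
  have hrange : f.range = ⊤ := by
    rcases Subgroup.eq_bot_or_eq_top_of_prime_card f.range with h | h
    · exfalso
      apply hf
      ext g
      have : f g ∈ f.range := ⟨g, rfl⟩
      rw [h, Subgroup.mem_bot] at this
      simp [this]
    · exact h
  rw [hrange, Subgroup.card_top, hcard2]

/-- A finite group with at least one index-2 subgroup has an odd number of index-2 subgroups. -/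
theorem odd_card_index_two_subgroups
    (G : Type) [Group G] [Finite G]
    (h : ∃ H : Subgroup G, H.index = 2) :
    Odd (Nat.card {H : Subgroup G // H.index = 2}) := by
  classical
  -- the equivalence between nontrivial homs and index-2 subgroups
  let e : {f : G →* Multiplicative (ZMod 2) // f ≠ 1} ≃ {H : Subgroup G // H.index = 2} :=
    { toFun := fun f => ⟨f.1.ker, index_ker_eq_two f.1 f.2⟩
      invFun := fun H => ⟨homOfIndexTwo H.1 H.2, homOfIndexTwo_ne_one H.1 H.2⟩
      left_inv := by
        rintro ⟨f, hf⟩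
        ext g
        simp only [homOfIndexTwo, MonoidHom.coe_mk, OneHom.coe_mk]
        by_cases hg : g ∈ f.ker
        · simp [hg, MonoidHom.mem_ker.1 hg]
        · simp only [hg, if_false]
          have h1 : f g ≠ 1 := hg
          revert h1; generalize f g = x; revert x; decide
      right_inv := by
        rintro ⟨H, hH⟩
        simp [ker_homOfIndexTwo] }
  rw [← Nat.card_congr e]
  haveI : Finite (G →* Multiplicative (ZMod 2)) :=
    Finite.of_injective (fun f => (f : G → Multiplicative (ZMod 2))) DFunLike.coe_injective
  haveI : Fact (Nat.Prime 2) := ⟨Nat.prime_two⟩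
  have hpg : IsPGroup 2 (G →* Multiplicative (ZMod 2)) := by
    intro f
    refine ⟨1, ?_⟩
    ext g
    rw [pow_one, pow_two, MonoidHom.mul_apply]
    exact multZMod2_mul_self (f g)
  obtain ⟨n, hn⟩ := (IsPGroup.iff_card).1 hpg
  obtain ⟨H, hH⟩ := h
  have hnt : (1 : G →* Multiplicative (ZMod 2)) ≠ homOfIndexTwo H hH :=
    fun hc => homOfIndexTwo_ne_one H hH hc.symm
  haveI : Fintype (G →* Multiplicative (ZMod 2)) := Fintype.ofFinite _
  have hcard : Nat.card {f : G →* Multiplicative (ZMod 2) // f ≠ 1} =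
      Nat.card (G →* Multiplicative (ZMod 2)) - 1 := by
    rw [Nat.card_eq_fintype_card, Nat.card_eq_fintype_card]
    have := Fintype.card_subtype_compl (fun f : G →* Multiplicative (ZMod 2) => f = 1)
    rw [Fintype.card_subtype_eq (1 : G →* Multiplicative (ZMod 2))] at this
    convert this using 2
  rw [hcard, hn]
  have hn1 : 1 ≤ n := by
    by_contra hcontra
    push_neg at hcontra
    interval_cases n
    have h2 : Fintype.card (G →* Multiplicative (ZMod 2)) = 1 := by
      rw [← Nat.card_eq_fintype_card, hn]
      rfl
    have := Fintype.card_le_one_iff.1 h2.le (1 : G →* Multiplicative (ZMod 2))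
      (homOfIndexTwo H hH)
    exact hnt this
  have heven : Even (2 ^ n) := by
    exact (Nat.even_pow' (by omega)).2 even_two
  exact Nat.Even.sub_odd (Nat.one_le_two_pow) heven odd_one
end
end

section
/- Fix natural numbers g, r, m and a field k. Let rels : Fin r → FreeGroup (Fin g), and let Γ be the presented group on the generators Fin g with relators {rels j}. Let ι : FreeGroup (Fin g) →* FreeGroup (Fin g ⊕ Fin m) be the homomorphism induced by the inclusion of generators, let extra : Fin m → FreeGroup (Fin g ⊕ Fin m), and let Γ' be the presented group on the generators Fin g ⊕ Fin m with relators {ι(rels j)} ∪ {extra i}. Let φ : Γ →* Γ' be the homomorphism determined by sending the class of each generator of Fin g in Γ to the class of the corresponding generator in Γ' (this is well defined since each relator of Γ maps to a relator of Γ'). Let A be a representation of Γ' on a finite-dimensional k-vector space, and let φ*A be its pullback to Γ. If the k-dimension of H⁰(Γ; φ*A) equals the k-dimension of H⁰(Γ'; A), then the k-dimension of H¹(Γ; φ*A) is at most the k-dimension of H¹(Γ'; A). -/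
/-!
A 1-cocycle on a group `G` with values in `A` is the same as a splitting `g ↦ (c g, g)` of
`A ⋊ G → G`. Hence a cocycle on a free group is freely determined by its values on the
generators, and a cocycle on a presented group `⟨β | S⟩` is a cocycle on the free group that
vanishes on `S`; so `dim Z¹ = |β| · dim A - (rank of the relator conditions)`. Adding the
generators `γ` adds `|γ| · dim A` free parameters, and at most `|γ|` new relators impose at most
`|γ| · dim A` new linear conditions, so `dim Z¹` cannot drop. Finally
`dim H¹ = dim Z¹ - dim A + dim H⁰`, and `H⁰` has the same dimension on both sides.
-/

open Module groupCohomology Rep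

universe u

section

variable {k : Type u} [CommRing k]

section Semidirect

variable {G H : Type u} [Group G] [Group H] (A : Rep k G)

def Rep.toMulAut : G →* MulAut (Multiplicative A) where
  toFun g := AddEquiv.toMultiplicative
    ⟨⟨A.ρ g, A.ρ g⁻¹, A.ρ.inv_self_apply g, A.ρ.self_inv_apply g⟩, map_add _⟩
  map_one' := by ext; simp
  map_mul' g h := by ext; simp

@[simp] lemma Rep.toMulAut_apply (g : G) (x : Multiplicative A) :
    A.toMulAut g x = .ofAdd (A.ρ g x.toAdd) := rfl

variable {A}

def cocycles₁.toSemidirectProduct (π : H →* G) (c : cocycles₁ (res π A)) :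
    H →* Multiplicative A ⋊[A.toMulAut] G where
  toFun h := ⟨.ofAdd (c h), π h⟩
  map_one' := by ext <;> simp
  map_mul' g h := by
    ext
    · simp [(mem_cocycles₁_iff c).1 c.2 g h, add_comm]
    · simp

def cocycles₁OfSection (σ : G →* Multiplicative A ⋊[A.toMulAut] G)
    (hσ : SemidirectProduct.rightHom.comp σ = .id G) : cocycles₁ A :=
  ⟨fun g => (σ g).left.toAdd, by
    rw [mem_cocycles₁_iff]
    intro g h
    have hg : (σ g).right = g := DFunLike.congr_fun hσ g
    simp [SemidirectProduct.mul_left, hg, add_comm]⟩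

end Semidirect

section Free

variable {G : Type u} [Group G] {A : Rep k G}

lemma cocycles₁_eq_zero_of_closure_eq_top {S : Set G} (hS : Subgroup.closure S = ⊤)
    (c : cocycles₁ A) (hc : ∀ g ∈ S, c g = 0) : c = 0 := by
  refine cocycles₁_ext fun g => ?_
  change c g = 0
  have hg : g ∈ Subgroup.closure S := hS ▸ Subgroup.mem_top g
  induction hg using Subgroup.closure_induction with
  | mem x hx => exact hc x hx
  | one => simp
  | mul x y _ _ hx hy => simp [(mem_cocycles₁_iff c).1 c.2 x y, hx, hy]
  | inv x _ hx =>
    have h := cocycles₁_map_inv c x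
    rw [hx, neg_zero] at h
    rw [← A.ρ.inv_self_apply x (c x⁻¹), h, map_zero]

variable {β : Type u}

noncomputable def FreeGroup.cocycles₁EquivFun (A : Rep k (FreeGroup β)) :
    cocycles₁ A ≃ₗ[k] (β → A) :=
  LinearEquiv.ofBijective (LinearMap.funLeft k A FreeGroup.of ∘ₗ (cocycles₁ A).subtype) <| by
    refine ⟨(injective_iff_map_eq_zero _).2 fun c hc => ?_, fun v => ?_⟩
    · exact cocycles₁_eq_zero_of_closure_eq_top (FreeGroup.closure_range_of β) c
        (by rintro _ ⟨i, rfl⟩; exact congr_fun hc i)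
    · refine ⟨cocycles₁OfSection (FreeGroup.lift fun i => ⟨.ofAdd (v i), .of i⟩)
        (FreeGroup.ext_hom _ _ fun i => by simp), ?_⟩
      ext i
      simp [cocycles₁OfSection]

end Free

section Presented

variable {G H K : Type u} [Group G] [Group H] [Group K] {A : Rep k G}

def cocycles₁Comap {π : H →* G} {ψ : K →* G} (f : K →* H) (hf : π.comp f = ψ) :
    cocycles₁ (res π A) →ₗ[k] cocycles₁ (res ψ A) :=
  (LinearMap.funLeft k A f).restrict fun c hc => by
    rw [mem_cocycles₁_iff] at hc ⊢
    intro g h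
    simp [hc, ← hf]

@[simp] lemma cocycles₁Comap_apply {π : H →* G} {ψ : K →* G} (f : K →* H) (hf : π.comp f = ψ)
    (c : cocycles₁ (res π A)) (g : K) : cocycles₁Comap f hf c g = c (f g) := rfl

variable (A) in
def cocycles₁VanishingOn (S : Set G) : Submodule k (cocycles₁ A) where
  carrier := {c | ∀ r ∈ S, c r = 0}
  add_mem' {c d} hc hd r hr := show c r + d r = 0 by rw [hc r hr, hd r hr, add_zero]
  zero_mem' _ _ := rfl
  smul_mem' a c hc r hr := show a • c r = 0 by rw [hc r hr, smul_zero]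

variable {β : Type u} {S : Set (FreeGroup β)} (B : Rep k (PresentedGroup S))

noncomputable def PresentedGroup.cocycles₁EquivVanishingOn :
    cocycles₁ B ≃ₗ[k] cocycles₁VanishingOn (res (PresentedGroup.mk S) B) S := by
  refine LinearEquiv.ofBijective
    ((cocycles₁Comap (π := MonoidHom.id _) (PresentedGroup.mk S) (MonoidHom.id_comp _)).codRestrict
      _ fun c => by intro r hr; simp [PresentedGroup.one_of_mem hr])
    ⟨fun c d h => ?_, fun c => ?_⟩
  · refine cocycles₁_ext fun γ => ?_
    obtain ⟨x, rfl⟩ := PresentedGroup.mk_surjective S γ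
    exact congrArg (fun e => e.1 x) h
  · have hS : Subgroup.normalClosure S ≤
        (cocycles₁.toSemidirectProduct (PresentedGroup.mk S) c.1).ker :=
      Subgroup.normalClosure_le_normal fun r hr => by
        ext
        · exact congrArg Multiplicative.ofAdd (c.2 r hr)
        · exact PresentedGroup.one_of_mem hr
    let σ : PresentedGroup S →* Multiplicative B ⋊[B.toMulAut] PresentedGroup S :=
      QuotientGroup.lift _ _ hS
    exact ⟨cocycles₁OfSection σ (PresentedGroup.ext fun i => rfl),
      Subtype.ext (cocycles₁_ext fun x => rfl)⟩

end Presented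

end

section Dimension

variable {k : Type u} [Field k]

theorem finrank_H1_add_finrank {G : Type u} [Group G] (A : Rep k G) [FiniteDimensional k A]
    [FiniteDimensional k (cocycles₁ A)] :
    finrank k (groupCohomology A 1) + finrank k A =
      finrank k (cocycles₁ A) + finrank k (groupCohomology A 0) := by
  have hker : LinearMap.ker (H1π A).hom = (coboundaries₁ A).comap (cocycles₁ A).subtype := by
    ext x
    exact H1π_eq_zero_iff x
  have hH1 : finrank k (groupCohomology A 1) + finrank k (coboundaries₁ A) =
      finrank k (cocycles₁ A) := by
    have hsurj : Function.Surjective (H1π A).hom :=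
      (ModuleCat.epi_iff_surjective _).1 inferInstance
    rw [← (H1π A).hom.finrank_range_add_finrank_ker, LinearMap.range_eq_top.2 hsurj,
      finrank_top, hker,
      (Submodule.comapSubtypeEquivOfLe (coboundaries₁_le_cocycles₁ A)).finrank_eq]
  have hd₀₁ : finrank k (coboundaries₁ A) + finrank k (groupCohomology A 0) = finrank k A := by
    rw [(H0Iso A).toLinearEquiv.finrank_eq, ← d₀₁_ker_eq_invariants]
    exact (d₀₁ A).hom.finrank_range_add_finrank_ker
  omega

theorem Submodule.finrank_le_finrank_comap_inf_ker {V W U : Type*} [AddCommGroup V] [Module k V]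
    [AddCommGroup W] [Module k W] [AddCommGroup U] [Module k U] [FiniteDimensional k V]
    [FiniteDimensional k W] [FiniteDimensional k U] (P : V →ₗ[k] W) (E : V →ₗ[k] U)
    (K : Submodule k W) (h : finrank k W + finrank k U ≤ finrank k V) :
    finrank k K ≤ finrank k ↥(K.comap P ⊓ LinearMap.ker E) := by
  let T := (K.mkQ ∘ₗ P).prod E
  have hker : LinearMap.ker T = K.comap P ⊓ LinearMap.ker E := by
    rw [LinearMap.ker_prod, LinearMap.ker_comp, Submodule.ker_mkQ]
  have hT := T.finrank_range_add_finrank_ker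
  have hrange : finrank k (LinearMap.range T) ≤ finrank k (W ⧸ K) + finrank k U :=
    (LinearMap.range T).finrank_le.trans_eq Module.finrank_prod
  have hK := K.finrank_quotient_add_finrank
  rw [hker] at hT
  omega

variable {β : Type u}

instance [Finite β] (A : Rep k (FreeGroup β)) [FiniteDimensional k A] :
    FiniteDimensional k (cocycles₁ A) :=
  (FreeGroup.cocycles₁EquivFun A).symm.finiteDimensional

instance [Finite β] {S : Set (FreeGroup β)} (B : Rep k (PresentedGroup S))
    [FiniteDimensional k B] : FiniteDimensional k (cocycles₁ B) :=
  Module.Finite.equiv (PresentedGroup.cocycles₁EquivVanishingOn B).symm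

theorem finrank_cocycles₁_freeGroup [Fintype β] (A : Rep k (FreeGroup β))
    [FiniteDimensional k A] : finrank k (cocycles₁ A) = Fintype.card β * finrank k A := by
  simp [(FreeGroup.cocycles₁EquivFun A).finrank_eq, Module.finrank_pi_fintype]

theorem finrank_cocycles₁_le_of_presentation_extension {γ γ' : Type u} [Fintype β] [Fintype γ]
    [Fintype γ'] (hγ : Fintype.card γ' ≤ Fintype.card γ) {S : Set (FreeGroup β)}
    {S' : Set (FreeGroup (β ⊕ γ))} (extra : γ' → FreeGroup (β ⊕ γ))
    (hS' : S' ⊆ FreeGroup.map Sum.inl '' S ∪ Set.range extra)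
    (φ : PresentedGroup S →* PresentedGroup S') (hφ : ∀ i, φ (.of i) = .of (Sum.inl i))
    (A : Rep k (PresentedGroup S')) [FiniteDimensional k A] :
    finrank k (cocycles₁ (res φ A)) ≤ finrank k (cocycles₁ A) := by
  have hsq : (PresentedGroup.mk S').comp (FreeGroup.map Sum.inl) = φ.comp (PresentedGroup.mk S) :=
    FreeGroup.ext_hom _ _ fun i => (hφ i).symm
  let P := cocycles₁Comap (A := A) (FreeGroup.map Sum.inl) hsq
  let E := LinearMap.funLeft k A extra ∘ₗ (cocycles₁ (res (PresentedGroup.mk S') A)).subtype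
  have hle : (cocycles₁VanishingOn _ S).comap P ⊓ LinearMap.ker E ≤
      cocycles₁VanishingOn (res (PresentedGroup.mk S') A) S' := by
    rintro c ⟨hc, hE⟩ r hr
    rcases hS' hr with ⟨s, hs, rfl⟩ | ⟨i, rfl⟩
    · exact hc s hs
    · exact congr_fun hE i
  have hdim : finrank k (cocycles₁ (res (PresentedGroup.mk S) (res φ A))) + finrank k (γ' → A) ≤
      finrank k (cocycles₁ (res (PresentedGroup.mk S') A)) := by
    rw [finrank_cocycles₁_freeGroup, finrank_cocycles₁_freeGroup, Module.finrank_pi_fintype,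
      Finset.sum_const, Finset.card_univ, smul_eq_mul, Fintype.card_sum, add_mul]
    exact Nat.add_le_add_left (Nat.mul_le_mul_right _ hγ) _
  calc finrank k (cocycles₁ (res φ A))
      = finrank k (cocycles₁VanishingOn (res (PresentedGroup.mk S) (res φ A)) S) :=
        (PresentedGroup.cocycles₁EquivVanishingOn _).finrank_eq
    _ ≤ finrank k ↥((cocycles₁VanishingOn _ S).comap P ⊓ LinearMap.ker E) :=
        Submodule.finrank_le_finrank_comap_inf_ker P E _ hdim
    _ ≤ finrank k (cocycles₁VanishingOn (res (PresentedGroup.mk S') A) S') :=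
        Submodule.finrank_mono hle
    _ = finrank k (cocycles₁ A) := (PresentedGroup.cocycles₁EquivVanishingOn A).finrank_eq.symm

end Dimension

/-- Adding `m` generators and `m` (plus the old) relators to a presentation can only
increase the dimension of `H¹` (with pulled-back coefficients), provided the dimensions
of `H⁰` agree. -/
theorem dim_H1_le_of_presentation_extension
    (g r m : ℕ) (k : Type) [Field k]
    (rels : Fin r → FreeGroup (Fin g))
    (extra : Fin m → FreeGroup (Fin g ⊕ Fin m))
    (φ : PresentedGroup (Set.range rels) →*
      PresentedGroup
        ((Set.range fun j => FreeGroup.map Sum.inl (rels j)) ∪ Set.range extra))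
    (hφ : ∀ i : Fin g,
      φ (PresentedGroup.of i) =
        PresentedGroup.of
          (rels := (Set.range fun j => FreeGroup.map Sum.inl (rels j)) ∪ Set.range extra)
          (Sum.inl i))
    (A : Rep k (PresentedGroup
        ((Set.range fun j => FreeGroup.map Sum.inl (rels j)) ∪ Set.range extra)))
    [FiniteDimensional k A]
    (h0 : Module.finrank k (groupCohomology (Rep.of (A.ρ.comp φ)) 0) =
      Module.finrank k (groupCohomology A 0)) :
    Module.finrank k (groupCohomology (Rep.of (A.ρ.comp φ)) 1) ≤
      Module.finrank k (groupCohomology A 1) := by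
  have hZ : finrank k (cocycles₁ (Rep.of (A.ρ.comp φ))) ≤ finrank k (cocycles₁ A) :=
    finrank_cocycles₁_le_of_presentation_extension le_rfl extra
      (Set.union_subset_union_left _ (Set.range_comp _ _).subset) φ hφ A
  have hB := finrank_H1_add_finrank (Rep.of (A.ρ.comp φ))
  have hA := finrank_H1_add_finrank A
  have hd : finrank k (Rep.of (A.ρ.comp φ)) = finrank k A := rfl
  omega
end

section
/- Let F be a field, V an F-vector space, S a subspace of V, and α : Fin m → V a family of vectors whose images in V/S form a basis of V/S. Let c be an m × m matrix over F, let σ : Fin m → V be a family of vectors with σ j ∈ S for every j, and set γ j = σ j + Σᵢ (c i j) • (α i). Let ι : V → ExteriorAlgebra F V be the canonical inclusion, let I be the two-sided ideal of the exterior algebra ExteriorAlgebra F V generated by the set {ι(s) : s ∈ S}, and let π be the quotient map onto (ExteriorAlgebra F V)/I. Then π(ι(γ 0) · ι(γ 1) ⋯ ι(γ (m−1))) = det(c) • π(ι(α 0) · ι(α 1) ⋯ ι(α (m−1))); moreover, if det(c) ≠ 0 then this common element of the quotient is nonzero. -/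
/-!
Modulo the ideal generated by `ι '' S`, the product `ι (γ 0) ⋯ ι (γ (m-1))` only sees `γ`
modulo `S`, so it equals `ιMulti` of the columns `∑ i, c i j • α i`; since `ιMulti` is
alternating, this is `det c • ιMulti α`. For nonvanishing, the ideal dies under the map induced
by `V → V ⧸ S`, which sends `ιMulti α` to `ιMulti B`, and lifting the top-degree form `B.det`
to the exterior algebra sends `ιMulti B` to `1`.
-/

namespace AlternatingMap

variable {R M N ι : Type*} [CommRing R] [AddCommGroup M] [Module R M] [AddCommGroup N]
  [Module R N] [Fintype ι] [DecidableEq ι]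

theorem eq_smulRight_basis_det (e : Module.Basis ι R M) (f : M [⋀^ι]→ₗ[R] N) :
    f = e.det.smulRight (f e) := by
  refine e.ext_alternating fun i h => ?_
  let σ : Equiv.Perm ι := Equiv.ofBijective i (Finite.injective_iff_bijective.1 h)
  change f (e ∘ σ) = e.det.smulRight (f e) (e ∘ σ)
  simp [map_perm, Module.Basis.det_self]

theorem map_sum_smul_eq_det_smul (f : M [⋀^ι]→ₗ[R] N) (v : ι → M) (c : Matrix ι ι R) :
    (f fun j => ∑ i, c i j • v i) = c.det • f v := by
  have h := DFunLike.congr_fun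
    ((f.compLinearMap (Fintype.linearCombination R v)).eq_smulRight_basis_det (Pi.basisFun R ι))
    fun j i => c i j
  have hv : (fun i => Fintype.linearCombination R v (Pi.basisFun R ι i)) = v := by
    ext i
    simp [Fintype.linearCombination_apply_single]
  rw [compLinearMap_apply, smulRight_apply, compLinearMap_apply, hv, Pi.basisFun_det] at h
  simp only [Fintype.linearCombination_apply] at h
  rw [h, ← Matrix.det_transpose c]
  rfl

end AlternatingMap

namespace ExteriorAlgebra

variable {R M : Type*} [CommRing R] [AddCommGroup M] [Module R M]

theorem mk'_ιMulti_eq_of_sub_mem {S : Submodule R M} {n : ℕ} {u w : Fin n → M}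
    (h : ∀ i, u i - w i ∈ S) :
    (TwoSidedIdeal.span (ι R '' (S : Set M))).ringCon.mk' (ιMulti R n u) =
      (TwoSidedIdeal.span (ι R '' (S : Set M))).ringCon.mk' (ιMulti R n w) := by
  simp only [ιMulti_apply, map_list_prod, List.map_ofFn]
  congr 2
  funext i
  refine (RingCon.eq _).mpr ((TwoSidedIdeal.rel_iff _ _ _).mpr ?_)
  rw [← map_sub]
  exact TwoSidedIdeal.subset_span ⟨_, h i, rfl⟩

theorem map_mkQ_eq_zero_of_mem_span_ι {S : Submodule R M} {x : ExteriorAlgebra R M}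
    (hx : x ∈ TwoSidedIdeal.span (ι R '' (S : Set M))) : map S.mkQ x = 0 := by
  refine (TwoSidedIdeal.mem_ker (map S.mkQ).toRingHom).mp (TwoSidedIdeal.mem_span_iff.mp hx _ ?_)
  rintro _ ⟨s, hs, rfl⟩
  simp [TwoSidedIdeal.mem_ker, (Submodule.Quotient.mk_eq_zero S).mpr hs]

theorem smul_ιMulti_basis_eq_zero_iff {n : ℕ} (b : Module.Basis (Fin n) R M) (d : R) :
    d • ιMulti R n b = 0 ↔ d = 0 := by
  classical
  refine ⟨fun h => ?_, fun h => by rw [h, zero_smul]⟩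
  have := congr_arg (liftAlternating (Function.update 0 n b.det)) h
  simpa [liftAlternating_apply_ιMulti, Module.Basis.det_self] using this

end ExteriorAlgebra

open ExteriorAlgebra in
/-- The exterior-algebra identity from Proposition 5.1: if the `α i` descend to a basis of
`V ⧸ S`, `σ j ∈ S`, and `γ j = σ j + ∑ i, c i j • α i`, then in the quotient of the
exterior algebra by the two-sided ideal generated by `ι '' S` one has
`π(ι(γ 0) ⋯ ι(γ (m-1))) = det c • π(ι(α 0) ⋯ ι(α (m-1)))`, and this element is nonzero
whenever `det c ≠ 0`. -/
theorem exterior_quotient_product_eq_det_smul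
    {F V : Type} [Field F] [AddCommGroup V] [Module F V] {m : ℕ}
    (S : Submodule F V) (α : Fin m → V)
    (B : Module.Basis (Fin m) F (V ⧸ S)) (hB : ∀ i, B i = Submodule.Quotient.mk (α i))
    (c : Matrix (Fin m) (Fin m) F) (σ : Fin m → V) (hσ : ∀ j, σ j ∈ S)
    (γ : Fin m → V) (hγ : ∀ j, γ j = σ j + ∑ i, c i j • α i) :
    (TwoSidedIdeal.span
        (⇑(ExteriorAlgebra.ι F (M := V)) '' (S : Set V))).ringCon.mk'
          ((List.ofFn fun i => ExteriorAlgebra.ι F (γ i)).prod) =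
      (TwoSidedIdeal.span
        (⇑(ExteriorAlgebra.ι F (M := V)) '' (S : Set V))).ringCon.mk'
          (c.det • (List.ofFn fun i => ExteriorAlgebra.ι F (α i)).prod) ∧
    (c.det ≠ 0 →
      (TwoSidedIdeal.span
        (⇑(ExteriorAlgebra.ι F (M := V)) '' (S : Set V))).ringCon.mk'
          ((List.ofFn fun i => ExteriorAlgebra.ι F (γ i)).prod) ≠ 0) := by
  set I := TwoSidedIdeal.span (⇑(ι F (M := V)) '' (S : Set V))
  have hmod :
      I.ringCon.mk' (ιMulti F m γ) = I.ringCon.mk' (ιMulti F m fun j => ∑ i, c i j • α i) :=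
    mk'_ιMulti_eq_of_sub_mem fun j => by rw [hγ j, add_sub_cancel_right]; exact hσ j
  have heq : I.ringCon.mk' ((List.ofFn fun i => ι F (γ i)).prod) =
      I.ringCon.mk' (c.det • (List.ofFn fun i => ι F (α i)).prod) := by
    rw [← ιMulti_apply, ← ιMulti_apply, hmod, AlternatingMap.map_sum_smul_eq_det_smul]
  refine ⟨heq, fun hdet h0 => hdet ?_⟩
  have hmem : c.det • ιMulti F m α ∈ I := by
    rw [heq, ← ιMulti_apply, ← map_zero I.ringCon.mk'] at h0
    exact (TwoSidedIdeal.mem_iff _ _).mpr ((RingCon.eq _).mp h0)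
  have hα : ⇑S.mkQ ∘ α = B := funext fun i => (hB i).symm
  rw [← smul_ιMulti_basis_eq_zero_iff B, ← hα, ← map_apply_ιMulti, ← map_smul]
  exact map_mkQ_eq_zero_of_mem_span_ι hmem
end

section
/- Let n ≥ 3, let a₁, …, aₙ ≥ 2 be pairwise coprime integers, and let b, b₁, …, bₙ be integers satisfying −b·(a₁⋯aₙ) + Σᵢ bᵢ·(a₁⋯aₙ)/aᵢ = 1. Then the Seifert homology-sphere group Γ(a₁,…,aₙ; b; b₁,…,bₙ) is a perfect group: its abelianization is trivial, i.e., its commutator subgroup is the whole group. -/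
/-- Relators of the Seifert homology-sphere presentation `Γ(a₁,…,aₙ; b; b₁,…,bₙ)`:
generators `x₁,…,xₙ` (indexed by `Fin n`) and `h` (indexed by `Unit`); relators are the
commutators `[xᵢ, h]`, the words `xᵢ^{aᵢ} h^{bᵢ}`, and the word `x₁⋯xₙ h^b`. -/
def seifertRels (n : ℕ) (a : Fin n → ℤ) (b : ℤ) (c : Fin n → ℤ) :
    Set (FreeGroup (Fin n ⊕ Unit)) :=
  (Set.range fun i : Fin n =>
      FreeGroup.of (Sum.inl i) * FreeGroup.of (Sum.inr ()) *
        (FreeGroup.of (Sum.inl i))⁻¹ * (FreeGroup.of (Sum.inr ()))⁻¹) ∪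
  (Set.range fun i : Fin n =>
      FreeGroup.of (Sum.inl i) ^ (a i) * FreeGroup.of (Sum.inr ()) ^ (c i)) ∪
  {(List.ofFn fun i : Fin n => FreeGroup.of (Sum.inl i)).prod *
      FreeGroup.of (Sum.inr ()) ^ b}

/-- The Seifert homology-sphere group `Γ(a₁,…,aₙ; b; b₁,…,bₙ)`, the fundamental group of
the Seifert fibered homology sphere `Σ(a₁,…,aₙ)`. -/
abbrev SeifertGroup (n : ℕ) (a : Fin n → ℤ) (b : ℤ) (c : Fin n → ℤ) : Type :=
  PresentedGroup (seifertRels n a b c)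

private lemma zpow_finset_sum {A : Type*} [CommGroup A] {ι : Type*} (H : A)
    (s : Finset ι) (g : ι → ℤ) : H ^ (∑ i ∈ s, g i) = ∏ i ∈ s, H ^ g i := by
  induction s using Finset.cons_induction with
  | empty => simp
  | cons i s hi ih => rw [Finset.sum_cons, Finset.prod_cons, zpow_add, ih]

/-- A Seifert homology-sphere group is perfect: its commutator subgroup is everything. -/
theorem seifertGroup_perfect
    (n : ℕ) (hn : 3 ≤ n) (a : Fin n → ℤ) (b : ℤ) (c : Fin n → ℤ)
    (h2 : ∀ i, 2 ≤ a i)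
    (hcop : ∀ i j, i ≠ j → IsCoprime (a i) (a j))
    (heq : -b * ∏ i, a i + ∑ i, c i * ∏ j ∈ Finset.univ.erase i, a j = 1) :
    commutator (SeifertGroup n a b c) = ⊤ := by
  set G := SeifertGroup n a b c
  let φ : FreeGroup (Fin n ⊕ Unit) →* Abelianization G :=
    Abelianization.of.comp (PresentedGroup.mk (seifertRels n a b c))
  set X : Fin n → Abelianization G := fun i => φ (FreeGroup.of (Sum.inl i)) with hXdef
  set H : Abelianization G := φ (FreeGroup.of (Sum.inr ())) with hHdef
  set P : ℤ := ∏ i, a i with hPdef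
  set Q : Fin n → ℤ := fun i => ∏ j ∈ Finset.univ.erase i, a j with hQdef
  have hrel : ∀ r ∈ seifertRels n a b c, φ r = 1 := by
    intro r hr
    have h1 : PresentedGroup.mk (seifertRels n a b c) r = 1 :=
      (QuotientGroup.eq_one_iff r).mpr (Subgroup.subset_normalClosure hr)
    show Abelianization.of (PresentedGroup.mk (seifertRels n a b c) r) = 1
    rw [h1, map_one]
  have rel2 : ∀ i, X i ^ (a i) * H ^ (c i) = 1 := by
    intro i
    have := hrel _ (Or.inl (Or.inr ⟨i, rfl⟩))
    rwa [map_mul, map_zpow, map_zpow] at this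
  have rel3 : (∏ i, X i) * H ^ b = 1 := by
    have := hrel _ (Or.inr rfl)
    rw [map_mul, map_zpow, map_list_prod, List.map_ofFn, List.prod_ofFn] at this
    simpa using this
  have haQ : ∀ i, a i * Q i = P := fun i => Finset.mul_prod_erase _ _ (Finset.mem_univ i)
  have hHc : ∀ i, H ^ (c i) = (X i ^ (a i))⁻¹ := fun i =>
    eq_inv_of_mul_eq_one_right (rel2 i)
  have hprodX : (∏ i, X i) = (H ^ b)⁻¹ := eq_inv_of_mul_eq_one_left rel3
  -- H = 1
  have hH1 : H = 1 := by
    have key : ∀ i, H ^ (c i * Q i) = X i ^ (-P) := by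
      intro i
      rw [zpow_mul, hHc i, inv_zpow, ← zpow_mul, haQ i, ← zpow_neg]
    calc H = H ^ (-b * P + ∑ i, c i * Q i) := by rw [heq, zpow_one]
      _ = H ^ (-b * P) * ∏ i, H ^ (c i * Q i) := by
            rw [zpow_add, zpow_finset_sum]
      _ = H ^ (-b * P) * ∏ i, X i ^ (-P) := by
            congr 1; exact Finset.prod_congr rfl fun i _ => key i
      _ = H ^ (-b * P) * (∏ i, X i) ^ (-P) := by rw [Finset.prod_zpow]
      _ = H ^ (-b * P) * H ^ (b * P) := by
            rw [hprodX, ← zpow_neg, ← zpow_mul]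
            congr 2
            ring
      _ = 1 := by rw [← zpow_add, neg_mul, neg_add_cancel, zpow_zero]
  have hXa : ∀ i, X i ^ (a i) = 1 := by
    intro i
    have := rel2 i
    rwa [hH1, one_zpow, mul_one] at this
  have hXP : (∏ i, X i) = 1 := by rw [hprodX, hH1, one_zpow, inv_one]
  have hXQ : ∀ i, X i ^ (Q i) = 1 := by
    intro i
    have h1 : (∏ k, X k ^ (Q i)) = 1 := by rw [Finset.prod_zpow, hXP, one_zpow]
    have h2 : ∀ k ∈ Finset.univ.erase i, X k ^ (Q i) = 1 := by
      intro k hk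
      have hki : k ≠ i := (Finset.mem_erase.mp hk).1
      have hQk : Q i = a k * ∏ j ∈ (Finset.univ.erase i).erase k, a j :=
        (Finset.mul_prod_erase _ _ (Finset.mem_erase.mpr ⟨hki, Finset.mem_univ k⟩)).symm
      rw [hQk, zpow_mul, hXa k, one_zpow]
    calc X i ^ (Q i)
        = X i ^ (Q i) * ∏ k ∈ Finset.univ.erase i, X k ^ (Q i) := by
          rw [Finset.prod_eq_one h2, mul_one]
      _ = ∏ k, X k ^ (Q i) :=
          Finset.mul_prod_erase Finset.univ (fun k => X k ^ (Q i)) (Finset.mem_univ i)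
      _ = 1 := h1
  have hX1 : ∀ i, X i = 1 := by
    intro i
    have hc : IsCoprime (a i) (Q i) :=
      IsCoprime.prod_right fun j hj =>
        hcop i j fun hij => (Finset.mem_erase.mp hj).1 hij.symm
    obtain ⟨u, v, huv⟩ := hc
    calc X i = X i ^ (u * a i + v * Q i) := by rw [huv, zpow_one]
      _ = (X i ^ (a i)) ^ u * (X i ^ (Q i)) ^ v := by
            rw [zpow_add, mul_comm u, mul_comm v, zpow_mul, zpow_mul]
      _ = 1 := by rw [hXa, hXQ, one_zpow, one_zpow, mul_one]
  rw [eq_top_iff, ← PresentedGroup.closure_range_of (seifertRels n a b c),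
    Subgroup.closure_le]
  rintro _ ⟨x, rfl⟩
  have hx1 : Abelianization.of (PresentedGroup.of (rels := seifertRels n a b c) x) = 1 := by
    cases x with
    | inl i => exact hX1 i
    | inr u => exact hH1
  exact (QuotientGroup.eq_one_iff _).mp hx1
end

section
/- Let n ≥ 3, let a₁, …, aₙ ≥ 2 be pairwise coprime integers, let k ≥ 1 be an integer coprime to each of a₁, …, a_{n−1}, and let b, b₁, …, bₙ be integers satisfying −b·(a₁⋯a_{n−1}·kaₙ) + Σ_{i<n} bᵢ·(a₁⋯a_{n−1}·kaₙ)/aᵢ + bₙ·(a₁⋯a_{n−1}) = 1. Let Γ' = Γ(a₁,…,a_{n−1}, kaₙ; b; b₁,…,bₙ) with generators x₁,…,xₙ, h, and let Γ = Γ(a₁,…,aₙ; kb; kb₁,…,kb_{n−1}, bₙ) with generators y₁,…,yₙ, h. Then there exists a group homomorphism φ : Γ' →* Γ with φ(h) = h^k and φ(xᵢ) = yᵢ for every i = 1, …, n. -/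
open PresentedGroup

theorem PresentedGroup.mk_of {α : Type*} {rels : Set (FreeGroup α)} (x : α) :
    mk rels (FreeGroup.of x) = of x := rfl

namespace SeifertGroup

variable {n : ℕ} {a : Fin n → ℤ} {b : ℤ} {c : Fin n → ℤ}

theorem commute_of_inl_of_inr (i : Fin n) :
    Commute (of (Sum.inl i) : SeifertGroup n a b c) (of (Sum.inr ())) := by
  have hrel := one_of_mem (rels := seifertRels n a b c) (Or.inl (Or.inl ⟨i, rfl⟩))
  simp only [map_mul, map_inv, mk_of, mul_inv_eq_iff_eq_mul] at hrel
  exact hrel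

theorem of_inl_zpow_mul_of_inr_zpow (i : Fin n) :
    (of (Sum.inl i) : SeifertGroup n a b c) ^ a i * of (Sum.inr ()) ^ c i = 1 := by
  have hrel := one_of_mem (rels := seifertRels n a b c) (Or.inl (Or.inr ⟨i, rfl⟩))
  simpa only [map_mul, map_zpow, mk_of] using hrel

theorem prod_of_inl_mul_of_inr_zpow :
    (List.ofFn fun i => (of (Sum.inl i) : SeifertGroup n a b c)).prod *
      of (Sum.inr ()) ^ b = 1 := by
  have hrel := one_of_mem (rels := seifertRels n a b c) (Or.inr rfl)
  simpa only [map_mul, map_zpow, map_list_prod, List.map_ofFn, Function.comp_def, mk_of]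
    using hrel

theorem exists_hom {G : Type*} [Group G] (y : Fin n → G) (z : G)
    (hcomm : ∀ i, Commute (y i) z) (hpow : ∀ i, y i ^ a i * z ^ c i = 1)
    (hprod : (List.ofFn y).prod * z ^ b = 1) :
    ∃ φ : SeifertGroup n a b c →* G,
      φ (of (Sum.inr ())) = z ∧ ∀ i, φ (of (Sum.inl i)) = y i := by
  have hrels : ∀ r ∈ seifertRels n a b c, FreeGroup.lift (Sum.elim y fun _ => z) r = 1 := by
    rintro r ((⟨i, rfl⟩ | ⟨i, rfl⟩) | rfl)
    · simp [(hcomm i).eq]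
    · simpa using hpow i
    · simpa [map_list_prod, List.map_ofFn, Function.comp_def] using hprod
  exact ⟨toGroup hrels, toGroup.of hrels, fun i => toGroup.of hrels⟩

end SeifertGroup

/-- Lemma 8.4 of the paper: with `Γ' = Γ(a₁,…,a_{n−1}, kaₙ; b; b₁,…,bₙ)` and
`Γ = Γ(a₁,…,aₙ; kb; kb₁,…,kb_{n−1}, bₙ)`, there is a homomorphism `φ : Γ' →* Γ` with
`φ(h) = h^k` and `φ(xᵢ) = yᵢ` for all `i`. -/
theorem seifert_cover_hom_exists
    (n : ℕ) (hn : 3 ≤ n) (a : Fin n → ℤ) (k : ℤ) (b : ℤ) (c : Fin n → ℤ) :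
    ∃ φ : SeifertGroup n
        (Function.update a (⟨n - 1, by omega⟩ : Fin n) (k * a ⟨n - 1, by omega⟩)) b c →*
      SeifertGroup n a (k * b)
        (fun i => if i = (⟨n - 1, by omega⟩ : Fin n) then c i else k * c i),
      φ (PresentedGroup.of (Sum.inr ())) = (PresentedGroup.of (Sum.inr ())) ^ k ∧
      ∀ i : Fin n, φ (PresentedGroup.of (Sum.inl i)) = PresentedGroup.of (Sum.inl i) := by
  set i₀ : Fin n := ⟨n - 1, by omega⟩
  set x : Fin n → SeifertGroup n a (k * b) (fun i => if i = i₀ then c i else k * c i) :=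
    fun i => of (Sum.inl i)
  set h : SeifertGroup n a (k * b) (fun i => if i = i₀ then c i else k * c i) := of (Sum.inr ())
  refine SeifertGroup.exists_hom x (h ^ k)
    (fun i => (SeifertGroup.commute_of_inl_of_inr i).zpow_right k) (fun i => ?_) ?_
  · have hrel : x i ^ a i * h ^ (if i = i₀ then c i else k * c i) = 1 :=
      SeifertGroup.of_inl_zpow_mul_of_inr_zpow i
    by_cases hi : i = i₀
    · -- The relator `xₙ^{k aₙ} h^{bₙ}` of `Γ'` goes to the `k`-th power of a relator of `Γ`.
      subst hi
      rw [if_pos rfl] at hrel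
      calc x i₀ ^ Function.update a i₀ (k * a i₀) i₀ * (h ^ k) ^ c i₀
          = (x i₀ ^ a i₀) ^ k * (h ^ c i₀) ^ k := by
            rw [Function.update_self]; group
        _ = (x i₀ ^ a i₀ * h ^ c i₀) ^ k :=
            (((SeifertGroup.commute_of_inl_of_inr i₀).zpow_zpow _ _).mul_zpow k).symm
        _ = 1 := by rw [hrel, one_zpow]
    · simpa only [Function.update_of_ne hi, ← zpow_mul, if_neg hi] using hrel
  · simpa only [← zpow_mul] using SeifertGroup.prod_of_inl_mul_of_inr_zpow
end
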